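/- Let Q be an irreducible 3×3 real transition rate matrix with stationary probability row vector μ, and let Π be a 3×K state-dependent probability matrix with columns φ_k and Λ_k = diag(φ_k). Then the observed process of the continuous-time three-state hidden Markov model is irreversible if and only if the underlying Markov process is irreversible (μ_i·Q_{ij} ≠ μ_j·Q_{ji} for some i, j) and Π is regular (no two rows of Π are equal). -/

import Mathlib

/-!
Let `Q̂ = D_μ⁻¹ Qᵀ D_μ` be the generator of the time-reversed chain. Transposing the matrix
product shows that the observation probabilities of the reversed symbol sequence under `Q`
are the forward ones under `Q̂`. If the chain is reversible then `Q̂ = Q`. If two rows of `E`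
agree and `k` is the remaining state, every `Λ_s` lies in `span {I, diag e_k}`; expanding the
product shows that the observation probabilities depend on the chain only through `μ` and
`t ↦ exp(tQ)_kk`, which `Q` and `Q̂` share.

Conversely, the net flux `F(t) = D_μ exp(tQ) - (D_μ exp(tQ))ᵀ` is antisymmetric with zero
row sums, so on three states `F(t) v = c(t) (v × 𝟙)`. Its derivative at `0` is the net flux
of `Q`, so an irreversible chain has `c(τ) ≠ 0` for some `τ ≥ 0`. The one- and two-step
reversibility identities at time `τ` then make `𝟙, φ_a, φ_b` and `𝟙, φ_a, φ_a²` linearly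
dependent for all columns `φ_a, φ_b` of `E`, which forces two rows of `E` to coincide.
-/

open Matrix

/-- The matrix product `Λ_{s₀} · exp(t₀Q) · Λ_{s₁} · ⋯ · exp(t_{r−1}Q) · Λ_{s_r}`
appearing in the finite-dimensional distributions of the observed process of a
continuous-time hidden Markov model with transition rate matrix `Q` and
state-dependent probability matrix `E`. -/
noncomputable def obsProd (Q : Matrix (Fin 3) (Fin 3) ℝ) {K : ℕ}
    (E : Matrix (Fin 3) (Fin K) ℝ) {r : ℕ} (s : Fin (r + 1) → Fin K)
    (t : Fin r → ℝ) : Matrix (Fin 3) (Fin 3) ℝ :=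
  Matrix.diagonal (fun a => E a (s 0)) *
    (List.ofFn fun i : Fin r =>
      NormedSpace.exp (t i • Q) * Matrix.diagonal fun a => E a (s i.succ)).prod

open NormedSpace

variable {ι : Type*} [Fintype ι] [DecidableEq ι]

theorem SemiconjBy.matrix_exp {D A B : Matrix ι ι ℝ} (h : SemiconjBy D A B) :
    SemiconjBy D (exp A) (exp B) :=
  open scoped Matrix.Norms.Operator in h.exp_right

namespace Matrix

theorem exp_mulVec_of_mulVec_eq_zero {A : Matrix ι ι ℝ} {v : ι → ℝ} (h : A *ᵥ v = 0) :
    exp A *ᵥ v = v := by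
  have hC : SemiconjBy (replicateCol ι v) 0 A := by
    rw [SemiconjBy, mul_zero, ← replicateCol_mulVec, h, replicateCol_zero]
  funext i
  have := congrFun (congrFun hC.matrix_exp i) i
  rw [exp_zero, mul_one, ← replicateCol_mulVec] at this
  exact this.symm

theorem vecMul_exp_of_vecMul_eq_zero {A : Matrix ι ι ℝ} {v : ι → ℝ} (h : v ᵥ* A = 0) :
    v ᵥ* exp A = v := by
  rw [← mulVec_transpose, ← exp_transpose]
  exact exp_mulVec_of_mulVec_eq_zero (by rwa [mulVec_transpose])

theorem exp_add_smul (A : Matrix ι ι ℝ) (σ τ : ℝ) :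
    exp ((σ + τ) • A) = exp (σ • A) * exp (τ • A) := by
  rw [add_smul]
  exact exp_add_of_commute _ _ (((Commute.refl A).smul_left σ).smul_right τ)

theorem exp_smul_mulVec_one {Q : Matrix ι ι ℝ} (hQ : Q *ᵥ 1 = 0) (τ : ℝ) :
    exp (τ • Q) *ᵥ 1 = 1 :=
  exp_mulVec_of_mulVec_eq_zero (by rw [smul_mulVec, hQ, smul_zero])

theorem vecMul_exp_smul {μ : ι → ℝ} {Q : Matrix ι ι ℝ} (hμQ : μ ᵥ* Q = 0) (τ : ℝ) :
    μ ᵥ* exp (τ • Q) = μ :=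
  vecMul_exp_of_vecMul_eq_zero (by rw [vecMul_smul, hμQ, smul_zero])

theorem hasDerivAt_exp_smul_apply (Q : Matrix ι ι ℝ) (i j : ι) :
    HasDerivAt (fun τ : ℝ => exp (τ • Q) i j) (Q i j) 0 := by
  open scoped Norms.Operator in
  have h := hasDerivAt_exp_smul_const' (𝕂 := ℝ) Q (0 : ℝ)
  rw [zero_smul, exp_zero, mul_one] at h
  exact ((entryLinearMap ℝ ℝ i j).toContinuousLinearMap.hasFDerivAt).comp_hasDerivAt 0 h

theorem diagonal_mulVec_one (v : ι → ℝ) : diagonal v *ᵥ 1 = v := by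
  funext i
  rw [mulVec_diagonal, Pi.one_apply, mul_one]

theorem one_vecMul_diagonal (v : ι → ℝ) : 1 ᵥ* diagonal v = v := by
  funext i
  rw [vecMul_diagonal, Pi.one_apply, one_mul]

theorem vecMul_dotProduct_one (v : ι → ℝ) (A : Matrix ι ι ℝ) :
    (v ᵥ* A) ⬝ᵥ 1 = (1 ᵥ* (diagonal v * A)) ⬝ᵥ 1 := by
  rw [← vecMul_vecMul, one_vecMul_diagonal]

omit [DecidableEq ι] in
theorem one_vecMul_transpose_dotProduct_one (A : Matrix ι ι ℝ) :
    (1 ᵥ* Aᵀ) ⬝ᵥ 1 = (1 ᵥ* A) ⬝ᵥ 1 := by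
  rw [← dotProduct_mulVec, mulVec_transpose, dotProduct_comm]

end Matrix

omit [Fintype ι] in
theorem smul_one_add_smul_single_mul (c d : ℝ) (k : ι) (x : ι → ℝ) :
    (c • 1 + d • Pi.single k 1) * x = c • x + (d * x k) • Pi.single k 1 := by
  funext i
  by_cases h : i = k
  · subst h
    simp only [Pi.mul_apply, Pi.add_apply, Pi.smul_apply, Pi.one_apply, smul_eq_mul, mul_one,
      Pi.single_eq_same]
    ring
  · simp [h]

theorem HasDerivAt.eq_zero_of_forall_ge {f : ℝ → ℝ} {f' a : ℝ} (hf : HasDerivAt f f' a)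
    (h : ∀ x, a ≤ x → f x = 0) : f' = 0 :=
  (uniqueDiffOn_Ici a a Set.self_mem_Ici).eq_deriv _ hf.hasDerivWithinAt
    ((hasDerivWithinAt_const a _ 0).congr (fun x hx => h x hx) (h a le_rfl))

/-- `D_μ⁻¹ Qᵀ D_μ`, the generator of the time-reversed chain when `μ` is stationary. -/
noncomputable def timeReversal (μ : ι → ℝ) (Q : Matrix ι ι ℝ) : Matrix ι ι ℝ :=
  of fun i j => μ j * Q j i / μ i

def netFlux (μ : ι → ℝ) (P : Matrix ι ι ℝ) : Matrix ι ι ℝ :=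
  diagonal μ * P - (diagonal μ * P)ᵀ

section Chain

variable {μ : ι → ℝ} {Q : Matrix ι ι ℝ}

omit [Fintype ι] [DecidableEq ι] in
theorem timeReversal_eq_self (h : ∀ i j, μ i * Q i j = μ j * Q j i) (hμ : ∀ i, μ i ≠ 0) :
    timeReversal μ Q = Q := by
  ext i j
  rw [timeReversal, of_apply, ← h, mul_div_cancel_left₀ _ (hμ i)]

omit [DecidableEq ι] in
theorem timeReversal_mulVec_one (hμQ : μ ᵥ* Q = 0) : timeReversal μ Q *ᵥ 1 = 0 := by
  funext i
  have hi := congrFun hμQ i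
  simp only [vecMul, dotProduct, Pi.zero_apply] at hi
  simp only [mulVec, dotProduct, timeReversal, of_apply, Pi.one_apply, mul_one,
    ← Finset.sum_div, hi, zero_div, Pi.zero_apply]

omit [DecidableEq ι] in
theorem vecMul_timeReversal (hQ : Q *ᵥ 1 = 0) (hμ : ∀ i, μ i ≠ 0) :
    μ ᵥ* timeReversal μ Q = 0 := by
  funext j
  have hj := congrFun hQ j
  simp only [mulVec, dotProduct, Pi.one_apply, mul_one, Pi.zero_apply] at hj
  simp only [vecMul, dotProduct, timeReversal, of_apply, mul_div_cancel₀ _ (hμ _)]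
  rw [← Finset.mul_sum, hj, mul_zero, Pi.zero_apply]

theorem semiconjBy_timeReversal (hμ : ∀ i, μ i ≠ 0) :
    SemiconjBy (diagonal μ) (timeReversal μ Q) Qᵀ := by
  ext i j
  rw [diagonal_mul, mul_diagonal, timeReversal, of_apply, transpose_apply,
    mul_div_cancel₀ _ (hμ i), mul_comm]

theorem semiconjBy_exp_timeReversal (hμ : ∀ i, μ i ≠ 0) (τ : ℝ) :
    SemiconjBy (diagonal μ) (exp (τ • timeReversal μ Q)) (exp (τ • Q))ᵀ := by
  rw [← exp_transpose, transpose_smul]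
  exact ((semiconjBy_timeReversal hμ).smul_right τ).matrix_exp

theorem exp_timeReversal_apply_self (hμ : ∀ i, μ i ≠ 0) (τ : ℝ) (k : ι) :
    exp (τ • timeReversal μ Q) k k = exp (τ • Q) k k := by
  have := congrFun (congrFun (semiconjBy_exp_timeReversal (Q := Q) hμ τ).eq k) k
  rw [diagonal_mul, mul_diagonal, transpose_apply, mul_comm] at this
  exact mul_right_cancel₀ (hμ k) this

theorem netFlux_apply (P : Matrix ι ι ℝ) (i j : ι) :
    netFlux μ P i j = μ i * P i j - μ j * P j i := by
  simp [netFlux, diagonal_mul, mul_comm]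

theorem netFlux_transpose (P : Matrix ι ι ℝ) : (netFlux μ P)ᵀ = -netFlux μ P := by
  rw [netFlux, transpose_sub, transpose_transpose, neg_sub]

theorem netFlux_mulVec_one {P : Matrix ι ι ℝ} (hP : P *ᵥ 1 = 1) (hμP : μ ᵥ* P = μ) :
    netFlux μ P *ᵥ 1 = 0 := by
  rw [netFlux, sub_mulVec, ← mulVec_mulVec, hP, mulVec_transpose, ← vecMul_vecMul,
    diagonal_mulVec_one, one_vecMul_diagonal, hμP, sub_self]

theorem dotProduct_netFlux_mulVec (P : Matrix ι ι ℝ) (u v : ι → ℝ) :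
    u ⬝ᵥ (netFlux μ P *ᵥ v) =
      (μ ᵥ* (diagonal u * P * diagonal v)) ⬝ᵥ 1 - (μ ᵥ* (diagonal v * P * diagonal u)) ⬝ᵥ 1 := by
  have hfwd : (μ ᵥ* (diagonal u * P * diagonal v)) ⬝ᵥ 1 = u ⬝ᵥ ((diagonal μ * P) *ᵥ v) := by
    simp only [dotProduct, vecMul, mul_diagonal, diagonal_mul, Pi.one_apply, mul_one, mulVec,
      Finset.mul_sum]
    rw [Finset.sum_comm]
    exact Finset.sum_congr rfl fun _ _ => Finset.sum_congr rfl fun _ _ => by ring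
  have hbwd : (μ ᵥ* (diagonal v * P * diagonal u)) ⬝ᵥ 1 = u ⬝ᵥ ((diagonal μ * P)ᵀ *ᵥ v) := by
    simp only [dotProduct, vecMul, mul_diagonal, diagonal_mul, Pi.one_apply, mul_one, mulVec,
      transpose_apply, Finset.mul_sum]
    exact Finset.sum_congr rfl fun _ _ => Finset.sum_congr rfl fun _ _ => by ring
  rw [hfwd, hbwd, netFlux, sub_mulVec, dotProduct_sub]

theorem netFlux_eq_zero_of_forall_exp
    (h : ∀ τ : ℝ, 0 ≤ τ → netFlux μ (exp (τ • Q)) = 0) : netFlux μ Q = 0 := by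
  ext i j
  refine HasDerivAt.eq_zero_of_forall_ge (f := fun τ => netFlux μ (exp (τ • Q)) i j) ?_
    fun τ hτ => by rw [h τ hτ, Matrix.zero_apply]
  simp only [netFlux_apply]
  exact ((hasDerivAt_exp_smul_apply Q i j).const_mul _).sub
    ((hasDerivAt_exp_smul_apply Q j i).const_mul _)

theorem exists_netFlux_exp_ne_zero (hirr : ¬∀ i j, μ i * Q i j = μ j * Q j i) :
    ∃ τ : ℝ, 0 ≤ τ ∧ netFlux μ (exp (τ • Q)) ≠ 0 := by
  by_contra! h
  refine hirr fun i j => sub_eq_zero.1 ?_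
  rw [← netFlux_apply, netFlux_eq_zero_of_forall_exp h, Matrix.zero_apply]

end Chain

theorem mulVec_eq_smul_cross_one {A : Matrix (Fin 3) (Fin 3) ℝ} (hA : Aᵀ = -A)
    (h1 : A *ᵥ 1 = 0) (v : Fin 3 → ℝ) : A *ᵥ v = A 0 1 • (v ⨯₃ 1) := by
  have hs : ∀ i j, A j i = -A i j := fun i j => congrFun (congrFun hA i) j
  have hr : ∀ i, A i 0 + A i 1 + A i 2 = 0 := fun i => by
    simpa [mulVec, dotProduct, Fin.sum_univ_three] using congrFun h1 i
  have h00 : A 0 0 = 0 := by linarith [hs 0 0]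
  have h11 : A 1 1 = 0 := by linarith [hs 1 1]
  have h22 : A 2 2 = 0 := by linarith [hs 2 2]
  have h02 : A 0 2 = -A 0 1 := by linarith [hr 0]
  have h12 : A 1 2 = A 0 1 := by linarith [hr 1, hs 0 1]
  have h20 : A 2 0 = A 0 1 := by linarith [hs 0 2]
  have h21 : A 2 1 = -A 0 1 := by linarith [hs 1 2]
  funext i
  fin_cases i <;>
    simp [mulVec, dotProduct, Fin.sum_univ_three, cross_apply, h00, h11, h22, h02, h12, hs 0 1,
      h20, h21] <;>
    ring

theorem exists_row_eq_of_dotProduct_cross_eq_zero {K : ℕ} (E : Matrix (Fin 3) (Fin K) ℝ)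
    (hpair : ∀ a b, (fun i => E i a) ⬝ᵥ ((fun i => E i b) ⨯₃ 1) = 0)
    (hsq : ∀ a, (fun i => E i a) ⬝ᵥ ((fun i => E i a * E i a) ⨯₃ 1) = 0) :
    ∃ i j, i ≠ j ∧ E i = E j := by
  by_contra! hreg
  obtain ⟨a, ha⟩ : ∃ a, E 0 a ≠ E 1 a := by
    by_contra! h
    exact hreg 0 1 (by decide) (funext h)
  have hb : ∀ b, E 0 a * (E 1 b - E 2 b) + E 1 a * (E 2 b - E 0 b) +
      E 2 a * (E 0 b - E 1 b) = 0 := fun b => by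
    simpa [cross_apply, dotProduct, Fin.sum_univ_three] using hpair a b
  have hv : (E 0 a - E 1 a) * ((E 1 a - E 2 a) * (E 2 a - E 0 a)) = 0 := by
    have h := hsq a
    simp only [dotProduct, cross_apply, Fin.isValue, Pi.one_apply, mul_one, Fin.sum_univ_three,
      cons_val_zero, cons_val_one, cons_val] at h
    linear_combination h
  rcases mul_eq_zero.1 hv with h | h
  · exact ha (sub_eq_zero.1 h)
  -- column `a` takes exactly two values; `hpair a b` makes the two rows on which it agrees
  -- agree at every `b`
  rcases mul_eq_zero.1 h with h | h
  · refine hreg 1 2 (by decide) (funext fun b => ?_)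
    have : (E 0 a - E 1 a) * (E 1 b - E 2 b) = 0 := by
      linear_combination hb b + (E 0 b - E 1 b) * h
    exact sub_eq_zero.1 ((mul_eq_zero.1 this).resolve_left (sub_ne_zero.2 ha))
  · refine hreg 0 2 (by decide) (funext fun b => ?_)
    have : (E 0 a - E 1 a) * (E 0 b - E 2 b) = 0 := by
      linear_combination hb b - (E 0 b - E 1 b) * h
    exact sub_eq_zero.1 ((mul_eq_zero.1 this).resolve_left (sub_ne_zero.2 ha))

section Observed

variable {Q Q' : Matrix (Fin 3) (Fin 3) ℝ} {μ : Fin 3 → ℝ} {K : ℕ} {E : Matrix (Fin 3) (Fin K) ℝ}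
  {k : Fin 3}

theorem obsProd_zero (s : Fin 1 → Fin K) (t : Fin 0 → ℝ) :
    obsProd Q E s t = diagonal fun a => E a (s 0) := by
  simp [obsProd]

theorem obsProd_succ {r : ℕ} (s : Fin (r + 2) → Fin K) (t : Fin (r + 1) → ℝ) :
    obsProd Q E s t = diagonal (fun a => E a (s 0)) * exp (t 0 • Q) *
      obsProd Q E (Fin.tail s) (Fin.tail t) := by
  simp only [obsProd, List.ofFn_succ, List.prod_cons, mul_assoc]
  rfl

theorem obsProd_succ' {r : ℕ} (s : Fin (r + 2) → Fin K) (t : Fin (r + 1) → ℝ) :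
    obsProd Q E s t = obsProd Q E (Fin.init s) (Fin.init t) * exp (t (Fin.last r) • Q) *
      diagonal fun a => E a (s (Fin.last (r + 1))) := by
  simp only [obsProd, List.ofFn_succ', List.concat_eq_append, List.prod_append,
    List.prod_singleton, mul_assoc]
  rfl

theorem obsProd_one (s : Fin 2 → Fin K) (t : Fin 1 → ℝ) :
    obsProd Q E s t =
      diagonal (fun a => E a (s 0)) * exp (t 0 • Q) * diagonal fun a => E a (s 1) := by
  rw [obsProd_succ, obsProd_zero]
  rfl

theorem obsProd_two (s : Fin 3 → Fin K) (t : Fin 2 → ℝ) :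
    obsProd Q E s t = diagonal (fun a => E a (s 0)) * exp (t 0 • Q) *
      diagonal (fun a => E a (s 1)) * exp (t 1 • Q) * diagonal fun a => E a (s 2) := by
  rw [obsProd_succ, obsProd_one]
  simp only [mul_assoc]
  rfl

theorem obsProd_zero_mulVec_one (s : Fin 1 → Fin K) (t : Fin 0 → ℝ) :
    obsProd Q E s t *ᵥ 1 = fun a => E a (s 0) := by
  funext i
  rw [obsProd_zero, mulVec_diagonal, Pi.one_apply, mul_one]

theorem obsProd_mulVec_one_succ {r : ℕ} (s : Fin (r + 2) → Fin K) (t : Fin (r + 1) → ℝ) :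
    obsProd Q E s t *ᵥ 1 =
      (fun a => E a (s 0)) * (exp (t 0 • Q) *ᵥ (obsProd Q E (Fin.tail s) (Fin.tail t) *ᵥ 1)) := by
  funext i
  rw [obsProd_succ, ← mulVec_mulVec, ← mulVec_mulVec, mulVec_diagonal, Pi.mul_apply]

def ObservedReversible (μ : Fin 3 → ℝ) (Q : Matrix (Fin 3) (Fin 3) ℝ) {K : ℕ}
    (E : Matrix (Fin 3) (Fin K) ℝ) : Prop :=
  ∀ (r : ℕ) (s : Fin (r + 1) → Fin K) (t : Fin r → ℝ), (∀ i, 0 ≤ t i) →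
    (μ ᵥ* obsProd Q E s t) ⬝ᵥ 1 = (μ ᵥ* obsProd Q E (s ∘ Fin.rev) (t ∘ Fin.rev)) ⬝ᵥ 1

theorem semiconjBy_obsProd_timeReversal (hμ : ∀ i, μ i ≠ 0) :
    ∀ {r : ℕ} (s : Fin (r + 1) → Fin K) (t : Fin r → ℝ),
      SemiconjBy (diagonal μ) (obsProd (timeReversal μ Q) E s t)
        (obsProd Q E (s ∘ Fin.rev) (t ∘ Fin.rev))ᵀ
  | 0, s, t => by
    rw [obsProd_zero, obsProd_zero, diagonal_transpose]
    exact commute_diagonal _ _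
  | r + 1, s, t => by
    have hs : Fin.init (s ∘ Fin.rev) = Fin.tail s ∘ Fin.rev := by
      funext i; simp [Fin.init, Fin.tail, Fin.rev_castSucc]
    have ht : Fin.init (t ∘ Fin.rev) = Fin.tail t ∘ Fin.rev := by
      funext i; simp [Fin.init, Fin.tail, Fin.rev_castSucc]
    rw [obsProd_succ, obsProd_succ' (s ∘ Fin.rev), hs, ht]
    simp only [Function.comp_apply, Fin.rev_last, transpose_mul, diagonal_transpose, ← mul_assoc]
    have hΛ : SemiconjBy (diagonal μ) (diagonal fun a => E a (s 0)) (diagonal fun a => E a (s 0)) :=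
      commute_diagonal _ _
    exact (hΛ.mul_right (semiconjBy_exp_timeReversal hμ _)).mul_right
      (semiconjBy_obsProd_timeReversal hμ _ _)

theorem vecMul_obsProd_rev_dotProduct (hμ : ∀ i, μ i ≠ 0) {r : ℕ}
    (s : Fin (r + 1) → Fin K) (t : Fin r → ℝ) :
    (μ ᵥ* obsProd Q E (s ∘ Fin.rev) (t ∘ Fin.rev)) ⬝ᵥ 1 =
      (μ ᵥ* obsProd (timeReversal μ Q) E s t) ⬝ᵥ 1 := by
  set M := obsProd Q E (s ∘ Fin.rev) (t ∘ Fin.rev)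
  calc (μ ᵥ* M) ⬝ᵥ 1 = (1 ᵥ* (diagonal μ * M)ᵀ) ⬝ᵥ 1 := by
        rw [one_vecMul_transpose_dotProduct_one, vecMul_dotProduct_one]
    _ = (1 ᵥ* (diagonal μ * obsProd (timeReversal μ Q) E s t)) ⬝ᵥ 1 := by
        rw [transpose_mul, diagonal_transpose, (semiconjBy_obsProd_timeReversal hμ s t).eq]
    _ = (μ ᵥ* obsProd (timeReversal μ Q) E s t) ⬝ᵥ 1 := (vecMul_dotProduct_one _ _).symm

theorem exp_mulVec_obsProd_mulVec_one_apply_eq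
    (hE : ∀ a, (fun i => E i a) ∈ Submodule.span ℝ {1, Pi.single k 1})
    (hQ : Q *ᵥ 1 = 0) (hQ' : Q' *ᵥ 1 = 0) (hkk : ∀ τ : ℝ, exp (τ • Q) k k = exp (τ • Q') k k) :
    ∀ {r : ℕ} (s : Fin (r + 1) → Fin K) (t : Fin r → ℝ) (σ : ℝ),
      (exp (σ • Q) *ᵥ (obsProd Q E s t *ᵥ 1)) k = (exp (σ • Q') *ᵥ (obsProd Q' E s t *ᵥ 1)) k
  | 0, s, t, σ => by
    obtain ⟨c, d, hcd⟩ := Submodule.mem_span_pair.1 (hE (s 0))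
    simp only [obsProd_zero_mulVec_one, ← hcd, mulVec_add, mulVec_smul, mulVec_single_one,
      exp_smul_mulVec_one hQ, exp_smul_mulVec_one hQ']
    simp [hkk σ]
  | r + 1, s, t, σ => by
    obtain ⟨c, d, hcd⟩ := Submodule.mem_span_pair.1 (hE (s 0))
    have hc : (exp (σ • Q) *ᵥ (exp (t 0 • Q) *ᵥ
          (obsProd Q E (Fin.tail s) (Fin.tail t) *ᵥ 1))) k =
        (exp (σ • Q') *ᵥ (exp (t 0 • Q') *ᵥ (obsProd Q' E (Fin.tail s) (Fin.tail t) *ᵥ 1))) k := by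
      rw [mulVec_mulVec _ (exp (σ • Q)), mulVec_mulVec _ (exp (σ • Q')), ← exp_add_smul,
        ← exp_add_smul]
      exact exp_mulVec_obsProd_mulVec_one_apply_eq hE hQ hQ' hkk _ _ _
    have hd := exp_mulVec_obsProd_mulVec_one_apply_eq hE hQ hQ' hkk (Fin.tail s) (Fin.tail t) (t 0)
    rw [obsProd_mulVec_one_succ, obsProd_mulVec_one_succ, ← hcd, smul_one_add_smul_single_mul,
      smul_one_add_smul_single_mul]
    simp only [mulVec_add, mulVec_smul, mulVec_single_one, Pi.add_apply, Pi.smul_apply,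
      col_apply, smul_eq_mul, hc, hd, hkk σ]

theorem vecMul_obsProd_dotProduct_one_eq
    (hE : ∀ a, (fun i => E i a) ∈ Submodule.span ℝ {1, Pi.single k 1})
    (hQ : Q *ᵥ 1 = 0) (hQ' : Q' *ᵥ 1 = 0) (hμQ : μ ᵥ* Q = 0) (hμQ' : μ ᵥ* Q' = 0)
    (hkk : ∀ τ : ℝ, exp (τ • Q) k k = exp (τ • Q') k k) :
    ∀ {r : ℕ} (s : Fin (r + 1) → Fin K) (t : Fin r → ℝ),
      (μ ᵥ* obsProd Q E s t) ⬝ᵥ 1 = (μ ᵥ* obsProd Q' E s t) ⬝ᵥ 1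
  | 0, s, t => by rw [obsProd_zero, obsProd_zero]
  | r + 1, s, t => by
    obtain ⟨c, d, hcd⟩ := Submodule.mem_span_pair.1 (hE (s 0))
    have hc : μ ⬝ᵥ (exp (t 0 • Q) *ᵥ (obsProd Q E (Fin.tail s) (Fin.tail t) *ᵥ 1)) =
        μ ⬝ᵥ (exp (t 0 • Q') *ᵥ (obsProd Q' E (Fin.tail s) (Fin.tail t) *ᵥ 1)) := by
      simp only [dotProduct_mulVec, vecMul_exp_smul hμQ, vecMul_exp_smul hμQ']
      exact vecMul_obsProd_dotProduct_one_eq hE hQ hQ' hμQ hμQ' hkk _ _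
    have hd := exp_mulVec_obsProd_mulVec_one_apply_eq hE hQ hQ' hkk (Fin.tail s) (Fin.tail t) (t 0)
    rw [← dotProduct_mulVec, ← dotProduct_mulVec, obsProd_mulVec_one_succ,
      obsProd_mulVec_one_succ, ← hcd, smul_one_add_smul_single_mul,
      smul_one_add_smul_single_mul]
    simp only [dotProduct_add, dotProduct_smul, dotProduct_single_one, smul_eq_mul, hc, hd]

theorem observedReversible_of_detailedBalance (hμ : ∀ i, μ i ≠ 0)
    (h : ∀ i j, μ i * Q i j = μ j * Q j i) : ObservedReversible μ Q E := fun _ s t _ => by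
  rw [vecMul_obsProd_rev_dotProduct hμ, timeReversal_eq_self h hμ]

theorem observedReversible_of_columns_mem_span (hμ : ∀ i, μ i ≠ 0) (hQ : Q *ᵥ 1 = 0)
    (hμQ : μ ᵥ* Q = 0)
    (hE : ∀ a, (fun i => E i a) ∈ Submodule.span ℝ {1, Pi.single k 1}) :
    ObservedReversible μ Q E := fun _ s t _ => by
  rw [vecMul_obsProd_rev_dotProduct hμ]
  exact vecMul_obsProd_dotProduct_one_eq hE hQ (timeReversal_mulVec_one hμQ) hμQ
    (vecMul_timeReversal hQ hμ) (fun τ => (exp_timeReversal_apply_self hμ τ k).symm) s t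

theorem exists_columns_mem_span_of_row_eq {i j : Fin 3} (hij : i ≠ j) (h : E i = E j) :
    ∃ k, ∀ a, (fun l => E l a) ∈ Submodule.span ℝ {1, Pi.single k 1} := by
  have third : ∀ i j : Fin 3, i ≠ j → ∃ k, k ≠ i ∧ k ≠ j ∧ ∀ l, l = i ∨ l = j ∨ l = k := by
    decide
  obtain ⟨k, hki, hkj, hk⟩ := third i j hij
  refine ⟨k, fun a => Submodule.mem_span_pair.2 ⟨E i a, E k a - E i a, funext fun l => ?_⟩⟩
  rcases hk l with rfl | rfl | rfl
  · simp [hki.symm]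
  · simp [hkj.symm, h]
  · simp

theorem exists_row_eq_of_observedReversible (hQ : Q *ᵥ 1 = 0) (hμQ : μ ᵥ* Q = 0)
    (hirr : ¬∀ i j, μ i * Q i j = μ j * Q j i) (hobs : ObservedReversible μ Q E) :
    ∃ i j, i ≠ j ∧ E i = E j := by
  obtain ⟨τ, hτ, hF⟩ := exists_netFlux_exp_ne_zero hirr
  set F := netFlux μ (exp (τ • Q))
  have hFv : ∀ v, F *ᵥ v = F 0 1 • (v ⨯₃ 1) := mulVec_eq_smul_cross_one (netFlux_transpose _)
    (netFlux_mulVec_one (exp_smul_mulVec_one hQ τ) (vecMul_exp_smul hμQ τ))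
  have hF01 : F 0 1 ≠ 0 := fun h0 =>
    hF (ext_iff_mulVec.2 fun v => by rw [hFv, h0, zero_smul, zero_mulVec])
  have hcross : ∀ u v, (μ ᵥ* (diagonal u * exp (τ • Q) * diagonal v)) ⬝ᵥ 1 =
      (μ ᵥ* (diagonal v * exp (τ • Q) * diagonal u)) ⬝ᵥ 1 → u ⬝ᵥ (v ⨯₃ 1) = 0 := by
    intro u v h
    have := dotProduct_netFlux_mulVec (μ := μ) (exp (τ • Q)) u v
    rw [h, sub_self, hFv, dotProduct_smul, smul_eq_mul] at this
    exact (mul_eq_zero.1 this).resolve_left hF01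
  refine exists_row_eq_of_dotProduct_cross_eq_zero E (fun a b => hcross _ _ ?_)
    (fun a => hcross _ _ ?_)
  · have := hobs 1 ![a, b] ![τ] (Fin.forall_fin_one.2 hτ)
    rwa [obsProd_one, obsProd_one] at this
  · have := hobs 2 (fun _ => a) ![τ, 0] (Fin.forall_fin_two.2 ⟨hτ, le_rfl⟩)
    rw [obsProd_two, obsProd_two] at this
    simpa [exp_zero, diagonal_mul_diagonal, mul_assoc] using this

end Observed

theorem observed_irreversible_iff_general
    (Q : Matrix (Fin 3) (Fin 3) ℝ) (μ : Fin 3 → ℝ)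
    {K : ℕ} (E : Matrix (Fin 3) (Fin K) ℝ)
    (hrow : ∀ i : Fin 3, ∑ j, Q i j = 0)
    (hpos : ∀ i, 0 < μ i)
    (hstat : μ ᵥ* Q = 0) :
    (¬ ∀ (r : ℕ) (s : Fin (r + 1) → Fin K) (t : Fin r → ℝ), (∀ i, 0 ≤ t i) →
        (μ ᵥ* obsProd Q E s t) ⬝ᵥ (fun _ => (1 : ℝ)) =
          (μ ᵥ* obsProd Q E (s ∘ Fin.rev) (t ∘ Fin.rev)) ⬝ᵥ (fun _ => (1 : ℝ)))
      ↔ ((∃ i j : Fin 3, μ i * Q i j ≠ μ j * Q j i) ∧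
          ∀ i j : Fin 3, i ≠ j → (fun k => E i k) ≠ (fun k => E j k)) := by
  have hQ : Q *ᵥ 1 = 0 := funext fun i => by simpa [mulVec, dotProduct] using hrow i
  have hμ : ∀ i, μ i ≠ 0 := fun i => (hpos i).ne'
  change ¬ObservedReversible μ Q E ↔ _
  rw [← not_iff_not, not_not, not_and_or]
  simp only [not_exists, not_not, not_forall, exists_prop]
  constructor
  · intro hobs
    exact or_iff_not_imp_left.2 fun hirr => exists_row_eq_of_observedReversible hQ hstat hirr hobs
  · rintro (hdb | ⟨i, j, hij, hEij⟩)
    · exact observedReversible_of_detailedBalance hμ hdb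
    · obtain ⟨k, hk⟩ := exists_columns_mem_span_of_row_eq (E := E) hij hEij
      exact observedReversible_of_columns_mem_span hμ hQ hstat hk

/-- The observed process of the continuous-time three-state hidden
Markov model is irreversible if and only if the underlying Markov process is
irreversible and the state-dependent probability matrix is regular (no two rows are
equal). -/
theorem observed_irreversible_iff
    (Q : Matrix (Fin 3) (Fin 3) ℝ) (μ : Fin 3 → ℝ)
    {K : ℕ} (E : Matrix (Fin 3) (Fin K) ℝ)
    (hoff : ∀ i j : Fin 3, i ≠ j → 0 ≤ Q i j)
    (hrow : ∀ i : Fin 3, ∑ j, Q i j = 0)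
    (hirr1 : (Q 0 1 + Q 0 2) * (Q 1 0 + Q 1 2) * (Q 2 0 + Q 2 1) > 0)
    (hirr2 : Q 1 0 + Q 2 0 > 0) (hirr3 : Q 0 1 + Q 2 1 > 0)
    (hirr4 : Q 0 2 + Q 1 2 > 0)
    (hpos : ∀ i, 0 < μ i) (hsum : μ 0 + μ 1 + μ 2 = 1)
    (hstat : μ ᵥ* Q = 0)
    (hE0 : ∀ a k, 0 ≤ E a k) (hE1 : ∀ a : Fin 3, ∑ k, E a k = 1) :
    (¬ ∀ (r : ℕ) (s : Fin (r + 1) → Fin K) (t : Fin r → ℝ), (∀ i, 0 ≤ t i) →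
        (μ ᵥ* obsProd Q E s t) ⬝ᵥ (fun _ => (1 : ℝ)) =
          (μ ᵥ* obsProd Q E (s ∘ Fin.rev) (t ∘ Fin.rev)) ⬝ᵥ (fun _ => (1 : ℝ)))
      ↔ ((∃ i j : Fin 3, μ i * Q i j ≠ μ j * Q j i) ∧
          ∀ i j : Fin 3, i ≠ j → (fun k => E i k) ≠ (fun k => E j k)) :=
  observed_irreversible_iff_general Q μ E hrow hpos hstat
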